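/- arXiv:2506.05066 — 3 statements merged into one kernel-verified Lean document; each statement's English description precedes it below -/
import Mathlib

section
/- Let Q be a Hermitian operator on a finite-dimensional complex inner product space V and let γ₅ be a Hermitian involution with {γ₅, Q} = 0. Then trace(γ₅) = n₊ − n₋, where n₊ (resp. n₋) is the dimension of the subspace of ker Q on which γ₅ acts as +1 (resp. −1). -/
/-! Since γ₅ is an involution, its trace is `dim E₊ - dim E₋` for its `±1`-eigenspaces `E±`, and by
rank–nullity `dim E± = dim (ker Q ⊓ E±) + dim Q(E±)`. Anticommutation makes `Q` swap `E₊` and `E₋`,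
while self-adjointness gives `ker Q ⊥ range Q`, so `Q` is injective on its range. Hence
`dim Q(E₊) = dim Q(Q(E₊)) ≤ dim Q(E₋)` and symmetrically, so the images cancel. -/

open Module

namespace LinearMap

section Field

variable {K V W : Type*} [Field K] [AddCommGroup V] [Module K V] [AddCommGroup W] [Module K W]

theorem finrank_eq_finrank_ker_inf_add_finrank_map (f : V →ₗ[K] W) (S : Submodule K V)
    [FiniteDimensional K S] :
    finrank K S = finrank K ↥(ker f ⊓ S) + finrank K ↥(S.map f) := by
  have h := finrank_range_add_finrank_ker (f.domRestrict S)
  rw [range_domRestrict, ker_domRestrict, ← Submodule.finrank_map_subtype_eq,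
    Submodule.map_comap_subtype, inf_comm] at h
  omega

theorem finrank_map_eq_of_disjoint_ker {f : V →ₗ[K] W} {S : Submodule K V}
    [FiniteDimensional K S] (h : Disjoint (ker f) S) :
    finrank K ↥(S.map f) = finrank K S := by
  rw [finrank_eq_finrank_ker_inf_add_finrank_map f S, h.eq_bot, finrank_bot, zero_add]

theorem finrank_map_le_finrank_map_of_map_le [FiniteDimensional K V] {q : V →ₗ[K] V}
    (hq : Disjoint (ker q) (range q)) {S T : Submodule K V} (h : S.map q ≤ T) :
    finrank K ↥(S.map q) ≤ finrank K ↥(T.map q) :=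
  calc finrank K ↥(S.map q) = finrank K ↥((S.map q).map q) :=
        (finrank_map_eq_of_disjoint_ker (hq.mono_right map_le_range)).symm
    _ ≤ finrank K ↥(T.map q) := Submodule.finrank_mono (Submodule.map_mono h)

theorem isProj_ker_sub_id_of_mul_self_eq_one [NeZero (2 : K)] {γ : V →ₗ[K] V}
    (hγ : γ * γ = 1) : IsProj (ker (γ - id)) ((2⁻¹ : K) • (id + γ)) := by
  have hγx (x : V) : γ (γ x) = x := congr($hγ x)
  refine ⟨fun x => ?_, fun x hx => ?_⟩
  · simp [hγx, add_comm]
  · rw [mem_ker, sub_apply, id_apply, sub_eq_zero] at hx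
    rw [smul_apply, add_apply, id_apply, hx, ← two_smul K x, smul_smul,
      inv_mul_cancel₀ two_ne_zero, one_smul]

theorem trace_eq_finrank_ker_sub_id_sub_finrank_ker_add_id [FiniteDimensional K V]
    [NeZero (2 : K)] {γ : V →ₗ[K] V} (hγ : γ * γ = 1) :
    trace K V γ = finrank K ↥(ker (γ - id)) - finrank K ↥(ker (γ + id)) := by
  have hplus := isProj_ker_sub_id_of_mul_self_eq_one hγ
  have hminus := isProj_ker_sub_id_of_mul_self_eq_one (γ := -γ) (by rwa [neg_mul_neg])
  rw [← neg_add', ker_neg] at hminus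
  have hsplit : (2⁻¹ : K) • (id + γ) - (2⁻¹ : K) • (id + -γ) = γ := by
    rw [← smul_sub, add_sub_add_left_eq_sub, sub_neg_eq_add, ← two_smul K γ, smul_smul,
      inv_mul_cancel₀ two_ne_zero, one_smul]
  calc trace K V γ
      = trace K V ((2⁻¹ : K) • (id + γ)) - trace K V ((2⁻¹ : K) • (id + -γ)) := by
        rw [← map_sub, hsplit]
    _ = finrank K ↥(ker (γ - id)) - finrank K ↥(ker (γ + id)) := by
        rw [hplus.trace, hminus.trace]

end Field

section Anticommute

variable {R V : Type*} [Ring R] [AddCommGroup V] [Module R V] {γ q : V →ₗ[R] V}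

theorem map_ker_sub_id_le_ker_add_id (h : γ * q + q * γ = 0) :
    (ker (γ - id)).map q ≤ ker (γ + id) := by
  rintro _ ⟨x, hx, rfl⟩
  rw [SetLike.mem_coe, mem_ker, sub_apply, id_apply, sub_eq_zero] at hx
  have hanti : γ (q x) + q (γ x) = 0 := congr($h x)
  rwa [hx] at hanti

theorem map_ker_add_id_le_ker_sub_id (h : γ * q + q * γ = 0) :
    (ker (γ + id)).map q ≤ ker (γ - id) := by
  rintro _ ⟨x, hx, rfl⟩
  rw [SetLike.mem_coe, mem_ker, add_apply, id_apply, add_eq_zero_iff_eq_neg] at hx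
  have hanti : γ (q x) + q (γ x) = 0 := congr($h x)
  rwa [hx, map_neg, ← sub_eq_add_neg] at hanti

end Anticommute

theorem finrank_map_ker_sub_id_eq_finrank_map_ker_add_id {K V : Type*} [Field K]
    [AddCommGroup V] [Module K V] [FiniteDimensional K V] {γ q : V →ₗ[K] V}
    (hq : Disjoint (ker q) (range q)) (h : γ * q + q * γ = 0) :
    finrank K ↥((ker (γ - id)).map q) = finrank K ↥((ker (γ + id)).map q) :=
  le_antisymm (finrank_map_le_finrank_map_of_map_le hq (map_ker_sub_id_le_ker_add_id h))
    (finrank_map_le_finrank_map_of_map_le hq (map_ker_add_id_le_ker_sub_id h))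

theorem IsSymmetric.disjoint_ker_range {𝕜 E : Type*} [RCLike 𝕜] [NormedAddCommGroup E]
    [InnerProductSpace 𝕜 E] {T : E →ₗ[𝕜] E} (hT : T.IsSymmetric) :
    Disjoint (ker T) (range T) := by
  rw [← hT.orthogonal_range]
  exact (Submodule.orthogonal_disjoint _).symm

end LinearMap

theorem trace_gamma5_eq_index_general
    {V : Type*} [NormedAddCommGroup V] [InnerProductSpace ℂ V] [FiniteDimensional ℂ V]
    (Q γ₅ : V →L[ℂ] V)
    (hQ : IsSelfAdjoint Q) (hγ₅sq : γ₅ * γ₅ = 1)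
    (hanti : γ₅ * Q + Q * γ₅ = 0) :
    LinearMap.trace ℂ V (γ₅ : V →ₗ[ℂ] V)
      = (finrank ℂ
          ↥(LinearMap.ker (Q : V →ₗ[ℂ] V) ⊓
            LinearMap.ker ((γ₅ : V →ₗ[ℂ] V) - LinearMap.id)) : ℂ)
        - (finrank ℂ
          ↥(LinearMap.ker (Q : V →ₗ[ℂ] V) ⊓
            LinearMap.ker ((γ₅ : V →ₗ[ℂ] V) + LinearMap.id)) : ℂ) := by
  have hγ : (γ₅ : V →ₗ[ℂ] V) * γ₅ = 1 := by
    rw [← ContinuousLinearMap.toLinearMap_mul, hγ₅sq, ContinuousLinearMap.toLinearMap_one]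
  have hγQ : (γ₅ : V →ₗ[ℂ] V) * Q + Q * γ₅ = 0 := by
    simp only [← ContinuousLinearMap.toLinearMap_mul, ← ContinuousLinearMap.toLinearMap_add, hanti,
      ContinuousLinearMap.toLinearMap_zero]
  have hranks := LinearMap.finrank_map_ker_sub_id_eq_finrank_map_ker_add_id
    hQ.isSymmetric.disjoint_ker_range hγQ
  rw [LinearMap.trace_eq_finrank_ker_sub_id_sub_finrank_ker_add_id hγ,
    LinearMap.finrank_eq_finrank_ker_inf_add_finrank_map (Q : V →ₗ[ℂ] V) (LinearMap.ker (_ - _)),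
    LinearMap.finrank_eq_finrank_ker_inf_add_finrank_map (Q : V →ₗ[ℂ] V) (LinearMap.ker (_ + _)),
    hranks]
  push_cast
  ring

/-- With `Q` Hermitian, `γ₅` a Hermitian involution anticommuting with `Q`,
`trace(γ₅) = n₊ − n₋`, where `n₊`/`n₋` are the dimensions of the `±1` eigenspaces of `γ₅`
inside `ker Q`. -/
theorem trace_gamma5_eq_index
    {V : Type*} [NormedAddCommGroup V] [InnerProductSpace ℂ V] [FiniteDimensional ℂ V]
    (Q γ₅ : V →L[ℂ] V)
    (hQ : IsSelfAdjoint Q) (hγ₅sa : IsSelfAdjoint γ₅) (hγ₅sq : γ₅ * γ₅ = 1)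
    (hanti : γ₅ * Q + Q * γ₅ = 0) :
    LinearMap.trace ℂ V (γ₅ : V →ₗ[ℂ] V)
      = (finrank ℂ
          ↥(LinearMap.ker (Q : V →ₗ[ℂ] V) ⊓
            LinearMap.ker ((γ₅ : V →ₗ[ℂ] V) - LinearMap.id)) : ℂ)
        - (finrank ℂ
          ↥(LinearMap.ker (Q : V →ₗ[ℂ] V) ⊓
            LinearMap.ker ((γ₅ : V →ₗ[ℂ] V) + LinearMap.id)) : ℂ) :=
  trace_gamma5_eq_index_general Q γ₅ hQ hγ₅sq hanti
end

section
/- Let Q : ℝ⁴ → GL(V) be a smooth map to invertible matrices on a finite-dimensional complex vector space V, with inverse G = Q⁻¹, and let γ be a matrix with γ² = 1 and {γ, Q(p)} = 0 for all p. Then the 2-index quantity T_{μν}(p) := tr(γ (∂_{p_ν}Q) (∂_{p_μ}G)) is symmetric in μ and ν. -/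
set_option maxHeartbeats 1000000


open Module

/-- For a smooth family `Q : ℝ⁴ → GL(V)` with pointwise inverse `G`,
and `γ` with `γ² = 1` anticommuting with every `Q p`, the quantity
`T μν(p) = tr(γ (∂_{p_ν}Q)(∂_{p_μ}G))` is symmetric in `μ` and `ν`. -/
theorem T_symmetric
    {n : ℕ}
    (Q G : EuclideanSpace ℝ (Fin 4) →
      (EuclideanSpace ℂ (Fin n) →L[ℂ] EuclideanSpace ℂ (Fin n)))
    (γ : EuclideanSpace ℂ (Fin n) →L[ℂ] EuclideanSpace ℂ (Fin n))
    (hQsmooth : ContDiff ℝ (⊤ : ℕ∞) Q)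
    (hinv : ∀ p, Q p * G p = 1 ∧ G p * Q p = 1)
    (hγsq : γ * γ = 1)
    (hγQ : ∀ p, γ * Q p + Q p * γ = 0) :
    ∀ (p : EuclideanSpace ℝ (Fin 4)) (μ ν : Fin 4),
      LinearMap.trace ℂ (EuclideanSpace ℂ (Fin n))
        ((γ * fderiv ℝ Q p (EuclideanSpace.single ν (1 : ℝ))
            * fderiv ℝ G p (EuclideanSpace.single μ (1 : ℝ)) :
          EuclideanSpace ℂ (Fin n) →L[ℂ] EuclideanSpace ℂ (Fin n)) :
          EuclideanSpace ℂ (Fin n) →ₗ[ℂ] EuclideanSpace ℂ (Fin n))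
      = LinearMap.trace ℂ (EuclideanSpace ℂ (Fin n))
        ((γ * fderiv ℝ Q p (EuclideanSpace.single μ (1 : ℝ))
            * fderiv ℝ G p (EuclideanSpace.single ν (1 : ℝ)) :
          EuclideanSpace ℂ (Fin n) →L[ℂ] EuclideanSpace ℂ (Fin n)) :
          EuclideanSpace ℂ (Fin n) →ₗ[ℂ] EuclideanSpace ℂ (Fin n)) := by
  intro p μ ν
  have hQd : ∀ q, HasFDerivAt Q (fderiv ℝ Q q) q := fun q =>
    ((hQsmooth.differentiable (by simp)) q).hasFDerivAt
  have hunit : ∀ q, IsUnit (Q q) := fun q => ⟨⟨Q q, G q, (hinv q).1, (hinv q).2⟩, rfl⟩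
  have hUinv : ∀ (q) (U : (EuclideanSpace ℂ (Fin n) →L[ℂ] EuclideanSpace ℂ (Fin n))ˣ), (U : EuclideanSpace ℂ (Fin n) →L[ℂ] EuclideanSpace ℂ (Fin n)) = Q q →
      ((U⁻¹ : (EuclideanSpace ℂ (Fin n) →L[ℂ] EuclideanSpace ℂ (Fin n))ˣ) : EuclideanSpace ℂ (Fin n) →L[ℂ] EuclideanSpace ℂ (Fin n)) = G q := by
    intro q U hU
    have h1 : ((U⁻¹ : (EuclideanSpace ℂ (Fin n) →L[ℂ] EuclideanSpace ℂ (Fin n))ˣ) : EuclideanSpace ℂ (Fin n) →L[ℂ] EuclideanSpace ℂ (Fin n)) * (Q q * G q)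
        = ((U⁻¹ : (EuclideanSpace ℂ (Fin n) →L[ℂ] EuclideanSpace ℂ (Fin n))ˣ) : EuclideanSpace ℂ (Fin n) →L[ℂ] EuclideanSpace ℂ (Fin n)) := by rw [(hinv q).1, mul_one]
    rw [← mul_assoc, ← hU, Units.inv_mul, one_mul] at h1
    exact h1.symm
  -- G equals Ring.inverse ∘ Q
  have hG : G = fun q => Ring.inverse (Q q) := by
    funext q
    obtain ⟨U, hU⟩ := hunit q
    rw [← hU, Ring.inverse_unit, hUinv q U hU]
  -- derivative of G
  obtain ⟨U, hU⟩ := hunit p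
  have hGd : HasFDerivAt G
      ((-(ContinuousLinearMap.mulLeftRight ℝ _ (↑U⁻¹) (↑U⁻¹))).comp
        (fderiv ℝ Q p)) p := by
    rw [hG]
    have h := hasFDerivAt_ringInverse (𝕜 := ℝ) U
    rw [hU] at h
    exact h.comp p (hQd p)
  have hG' : ∀ v, fderiv ℝ G p v = -(G p * fderiv ℝ Q p v * G p) := by
    intro v
    rw [hGd.fderiv]
    simp [ContinuousLinearMap.mulLeftRight_apply, hUinv p U hU]
  -- anticommutation of γ with derivative of Q
  have hanti : ∀ v, γ * fderiv ℝ Q p v = -(fderiv ℝ Q p v * γ) := by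
    intro v
    have h1 : HasFDerivAt (fun q => γ * Q q + Q q * γ)
        (γ • fderiv ℝ Q p + (fderiv ℝ Q p).smulRight γ) p :=
      ((hQd p).const_mul γ).add ((hQd p).mul_const' γ)
    have h3 : (fun q => γ * Q q + Q q * γ) =
        fun _ : EuclideanSpace ℝ (Fin 4) => (0 : EuclideanSpace ℂ (Fin n) →L[ℂ] EuclideanSpace ℂ (Fin n)) := funext hγQ
    rw [h3] at h1
    have h4 := h1.unique (hasFDerivAt_const 0 p)
    have h5 := congrArg (fun (L : EuclideanSpace ℝ (Fin 4) →L[ℝ] (EuclideanSpace ℂ (Fin n) →L[ℂ] EuclideanSpace ℂ (Fin n))) => L v) h4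
    simp only [ContinuousLinearMap.add_apply, ContinuousLinearMap.smul_apply,
      ContinuousLinearMap.smulRight_apply, smul_eq_mul,
      ContinuousLinearMap.zero_apply] at h5
    exact eq_neg_of_add_eq_zero_left h5
  -- anticommutation of γ with G
  have hγQ' : γ * Q p = -(Q p * γ) := eq_neg_of_add_eq_zero_left (hγQ p)
  have hγG : G p * γ = -(γ * G p) := by
    calc G p * γ = G p * γ * (Q p * G p) := by rw [(hinv p).1, mul_one]
      _ = G p * (γ * Q p) * G p := by simp only [mul_assoc]
      _ = G p * -(Q p * γ) * G p := by rw [hγQ']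
      _ = -(G p * Q p * (γ * G p)) := by
            rw [mul_neg (G p) (Q p * γ), neg_mul (G p * (Q p * γ)) (G p)]
            simp only [mul_assoc]
      _ = -(γ * G p) := by rw [(hinv p).2, one_mul]
  -- main computation
  set A := fderiv ℝ Q p (EuclideanSpace.single μ (1 : ℝ)) with hA
  set B := fderiv ℝ Q p (EuclideanSpace.single ν (1 : ℝ)) with hB
  set g := G p with hg
  rw [hG' (EuclideanSpace.single μ (1 : ℝ)), hG' (EuclideanSpace.single ν (1 : ℝ))]
  -- CLM-level identities
  have key : ∀ X Y : EuclideanSpace ℂ (Fin n) →L[ℂ] EuclideanSpace ℂ (Fin n),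
      LinearMap.trace ℂ (EuclideanSpace ℂ (Fin n)) ((X * Y : EuclideanSpace ℂ (Fin n) →L[ℂ] EuclideanSpace ℂ (Fin n)) : EuclideanSpace ℂ (Fin n) →ₗ[ℂ] EuclideanSpace ℂ (Fin n))
      = LinearMap.trace ℂ (EuclideanSpace ℂ (Fin n)) ((Y * X : EuclideanSpace ℂ (Fin n) →L[ℂ] EuclideanSpace ℂ (Fin n)) : EuclideanSpace ℂ (Fin n) →ₗ[ℂ] EuclideanSpace ℂ (Fin n)) := by
    intro X Y
    rw [ContinuousLinearMap.mul_def, ContinuousLinearMap.mul_def,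
      ContinuousLinearMap.toLinearMap_comp, ContinuousLinearMap.toLinearMap_comp,
      ← Module.End.mul_eq_comp, ← Module.End.mul_eq_comp, LinearMap.trace_mul_comm]
  have e1 : γ * B * -(g * A * g) = -((γ * B * g) * (A * g)) := by
    rw [mul_neg (γ * B) (g * A * g)]
    simp only [mul_assoc]
  have e2 : γ * A * -(g * B * g) = -((A * g) * (γ * B * g)) := by
    have hAγ : A * γ = -(γ * A) := by rw [hanti _, neg_neg]
    have hAg : A * g * γ = γ * (A * g) := by
      calc A * g * γ = A * (g * γ) := by rw [mul_assoc]
        _ = A * -(γ * g) := by rw [hγG]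
        _ = -(A * γ * g) := by
              rw [mul_neg A (γ * g)]; simp only [mul_assoc]
        _ = -(-(γ * A) * g) := by rw [hAγ]
        _ = γ * (A * g) := by
              rw [neg_mul (γ * A) g, neg_neg (γ * A * g)]
              exact mul_assoc γ A g
    calc γ * A * -(g * B * g) = -((γ * (A * g)) * (B * g)) := by
          rw [mul_neg (γ * A) (g * B * g)]
          simp only [mul_assoc]
      _ = -((A * g * γ) * (B * g)) := by rw [hAg]
      _ = -((A * g) * (γ * B * g)) := by simp only [mul_assoc]
  rw [e1, e2]
  simp only [ContinuousLinearMap.coe_neg, map_neg, neg_inj]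
  exact key _ _
end

section
/- Fix n ∈ ℕ, n ≥ 1, and κ > 0. For p ∈ ℝ⁴ define the function g(p) = κ²(p₁² + p₂²)ⁿ + p₃² + p₄². Then for every p₄ ≠ 0, ∫_{ℝ³} dp₁ dp₂ dp₃ [4 κ² n² (p₁² + p₂²)^{n−1} p₄ / g(p)²] = 4π² n · sgn(p₄). -/
/-!
The `p₃`-integral is elementary, `∫ dx / (a + x²)² = π / (2 a^{3/2})`, and leaves a radial
function of `(p₁, p₂)`. Polar coordinates followed by `t = r²` turn a plane integral of
`f (p₁² + p₂²)` into `π ∫₀^∞ f t dt`. The remaining integrand `t^{n-1} (κ² tⁿ + p₄²)^{-3/2}` is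
`-2 / (κ² n)` times the derivative of `(κ² tⁿ + p₄²)^{-1/2}`, so it integrates to
`2 / (κ² n |p₄|)`, and `p₄ / |p₄| = sgn p₄`.
-/

open MeasureTheory Set Filter Real

theorem Real.div_abs_eq_sign (r : ℝ) : r / |r| = Real.sign r := by
  rcases lt_trichotomy r 0 with hr | rfl | hr
  · rw [abs_of_neg hr, sign_of_neg hr, div_neg, div_self hr.ne]
  · simp
  · rw [abs_of_pos hr, sign_of_pos hr, div_self hr.ne']

theorem Complex.re_sq_add_im_sq (z : ℂ) : z.re ^ 2 + z.im ^ 2 = ‖z‖ ^ 2 := by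
  rw [Complex.sq_norm, Complex.normSq_apply]
  ring

section RadialIntegrals

variable {E : Type*} [NormedAddCommGroup E] [NormedSpace ℝ E]

theorem integrableOn_Ioi_smul_comp_sq_iff {f : ℝ → E} :
    IntegrableOn (fun r : ℝ => r • f (r ^ 2)) (Ioi 0) ↔ IntegrableOn f (Ioi 0) := by
  simpa [Real.rpow_two, show (2 : ℝ) - 1 = 1 by norm_num]
    using integrableOn_Ioi_comp_rpow_iff' f two_ne_zero

theorem integral_Ioi_smul_comp_sq (f : ℝ → E) :
    ∫ r in Ioi (0 : ℝ), r • f (r ^ 2) = (2 : ℝ)⁻¹ • ∫ t in Ioi (0 : ℝ), f t := by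
  rw [← integral_comp_rpow_Ioi f two_ne_zero]
  simp [show (2 : ℝ) - 1 = 1 by norm_num, mul_smul, integral_smul]

/- Passing through `ℂ`, whose norm is Euclidean (that of `ℝ × ℝ` is the sup norm), makes the
integration formulas for functions of the norm available. -/
theorem integrable_comp_sq_add_sq_iff {f : ℝ → E} :
    Integrable (fun q : ℝ × ℝ => f (q.1 ^ 2 + q.2 ^ 2)) ↔ IntegrableOn f (Ioi 0) := by
  rw [← Complex.volume_preserving_equiv_real_prod.integrable_comp_emb
    Complex.measurableEquivRealProd.measurableEmbedding]
  have h := integrable_fun_norm_addHaar (volume : Measure ℂ) (f := fun r => f (r ^ 2))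
  simp only [Complex.finrank_real_complex, Nat.add_one_sub_one, pow_one] at h
  simp only [Function.comp_def, Complex.measurableEquivRealProd_apply, Complex.re_sq_add_im_sq, h,
    integrableOn_Ioi_smul_comp_sq_iff]

theorem integral_comp_sq_add_sq (f : ℝ → E) :
    ∫ q : ℝ × ℝ, f (q.1 ^ 2 + q.2 ^ 2) = π • ∫ t in Ioi (0 : ℝ), f t := by
  rw [← Complex.volume_preserving_equiv_real_prod.integral_comp
    Complex.measurableEquivRealProd.measurableEmbedding]
  simp only [Complex.measurableEquivRealProd_apply, Complex.re_sq_add_im_sq,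
    integral_fun_norm_addHaar volume (fun r => f (r ^ 2)), Complex.finrank_real_complex,
    Nat.add_one_sub_one, pow_one, integral_Ioi_smul_comp_sq, measureReal_def, Complex.volume_ball]
  rw [← Nat.cast_smul_eq_nsmul ℝ, smul_smul, smul_smul]
  congr 1
  norm_num
  ring

end RadialIntegrals

theorem hasDerivAt_arctan_div_add_div_sq_add_sq {s : ℝ} (hs : s ≠ 0) (x : ℝ) :
    HasDerivAt (fun x => arctan (x / s) / (2 * s ^ 3) + x / (s ^ 2 + x ^ 2) / (2 * s ^ 2))
      ((s ^ 2 + x ^ 2) ^ 2)⁻¹ x := by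
  have hsx : s ^ 2 + x ^ 2 ≠ 0 := by positivity
  have harctan := ((hasDerivAt_id' x).div_const s).arctan
  have hrat := (hasDerivAt_id' x).div ((hasDerivAt_pow 2 x).const_add (s ^ 2)) hsx
  refine ((harctan.div_const (2 * s ^ 3)).add (hrat.div_const (2 * s ^ 2))).congr_deriv ?_
  field_simp
  norm_num
  ring

theorem tendsto_div_sq_add_sq_atTop (s : ℝ) :
    Tendsto (fun x : ℝ => x / (s ^ 2 + x ^ 2)) atTop (nhds 0) := by
  refine squeeze_zero' (eventually_ge_atTop 0 |>.mono fun x hx => by positivity)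
    (eventually_gt_atTop 0 |>.mono fun x hx => ?_) tendsto_inv_atTop_zero
  rw [div_le_iff₀ (by positivity)]
  field_simp
  nlinarith [sq_nonneg s]

theorem integral_inv_sq_add_sq_sq {s : ℝ} (hs : 0 < s) :
    ∫ x : ℝ, ((s ^ 2 + x ^ 2) ^ 2)⁻¹ = π / (2 * s ^ 3) := by
  have hlim : Tendsto (fun x => arctan (x / s) / (2 * s ^ 3) + x / (s ^ 2 + x ^ 2) / (2 * s ^ 2))
      atTop (nhds (π / 2 / (2 * s ^ 3) + 0 / (2 * s ^ 2))) :=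
    (((tendsto_nhds_of_tendsto_nhdsWithin tendsto_arctan_atTop).comp
      (tendsto_id.atTop_div_const hs)).div_const _).add
      ((tendsto_div_sq_add_sq_atTop s).div_const _)
  have hhalf := integral_Ioi_of_hasDerivAt_of_nonneg' (a := 0)
    (fun x _ => hasDerivAt_arctan_div_add_div_sq_add_sq hs.ne' x) (fun x _ => by positivity) hlim
  have heven := integral_comp_abs (f := fun x => ((s ^ 2 + x ^ 2) ^ 2)⁻¹)
  simp only [sq_abs] at heven
  rw [heven, hhalf]
  simp only [zero_div, add_zero, arctan_zero, ne_eq, OfNat.ofNat_ne_zero, not_false_eq_true,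
    zero_pow, sub_zero]
  ring

theorem integral_div_add_sq_sq (C : ℝ) {a : ℝ} (ha : 0 < a) :
    ∫ x : ℝ, C / (a + x ^ 2) ^ 2 = π * C / (2 * √a ^ 3) := by
  have hsq : ∀ x : ℝ, C / (a + x ^ 2) ^ 2 = C * ((√a ^ 2 + x ^ 2) ^ 2)⁻¹ := fun x => by
    rw [sq_sqrt ha.le, div_eq_mul_inv]
  simp_rw [hsq]
  rw [integral_const_mul, integral_inv_sq_add_sq_sq (sqrt_pos.2 ha)]
  ring

section RadialProfile

variable {n : ℕ} {c b : ℝ}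

theorem hasDerivAt_div_sqrt_mul_pow_add (hn : n ≠ 0) (hc : c ≠ 0) {t : ℝ}
    (ht : 0 < c * t ^ n + b) :
    HasDerivAt (fun t => -(2 / (c * n)) / √(c * t ^ n + b))
      (t ^ (n - 1) / √(c * t ^ n + b) ^ 3) t := by
  have hsqrt := (((hasDerivAt_pow n t).const_mul c).add_const b).sqrt ht.ne'
  refine ((hsqrt.inv (sqrt_pos.2 ht).ne').const_mul (-(2 / (c * n)))).congr_deriv ?_
  field_simp

theorem tendsto_div_sqrt_mul_pow_add_atTop (hn : n ≠ 0) (hc : 0 < c) (a : ℝ) :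
    Tendsto (fun t : ℝ => a / √(c * t ^ n + b)) atTop (nhds 0) :=
  tendsto_const_nhds.div_atTop <| tendsto_sqrt_atTop.comp <|
    tendsto_atTop_add_const_right _ b <| (tendsto_pow_atTop hn).const_mul_atTop hc

theorem integrableOn_Ioi_pow_div_sqrt_mul_pow_add_cube (hn : n ≠ 0) (hc : 0 < c) (hb : 0 < b) :
    IntegrableOn (fun t : ℝ => t ^ (n - 1) / √(c * t ^ n + b) ^ 3) (Ioi 0) :=
  integrableOn_Ioi_deriv_of_nonneg'
    (fun t (ht : 0 ≤ t) => hasDerivAt_div_sqrt_mul_pow_add hn hc.ne' (by positivity))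
    (fun t (ht : 0 < t) => by positivity) (tendsto_div_sqrt_mul_pow_add_atTop hn hc _)

theorem integral_Ioi_pow_div_sqrt_mul_pow_add_cube (hn : n ≠ 0) (hc : 0 < c) (hb : 0 < b) :
    ∫ t in Ioi (0 : ℝ), t ^ (n - 1) / √(c * t ^ n + b) ^ 3 = 2 / (c * n * √b) := by
  rw [integral_Ioi_of_hasDerivAt_of_nonneg'
    (fun t (ht : 0 ≤ t) => hasDerivAt_div_sqrt_mul_pow_add hn hc.ne' (by positivity))
    (fun t (ht : 0 < t) => by positivity) (tendsto_div_sqrt_mul_pow_add_atTop hn hc _)]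
  simp only [zero_pow hn, mul_zero, zero_add, zero_sub]
  field_simp

end RadialProfile

/-- for `n ≥ 1`, `κ > 0`, `g(p) = κ²(p₁²+p₂²)ⁿ + p₃² + p₄²`, and `p₄ ≠ 0`,
`∫_{ℝ³} 4κ²n²(p₁²+p₂²)^{n−1} p₄ / g(p)² dp₁dp₂dp₃ = 4π² n sgn(p₄)`. -/
theorem winding_integral_eq
    (n : ℕ) (hn : 1 ≤ n) (κ : ℝ) (hκ : 0 < κ) (p₄ : ℝ) (hp₄ : p₄ ≠ 0) :
    (∫ p₁ : ℝ, ∫ p₂ : ℝ, ∫ p₃ : ℝ,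
        4 * κ ^ 2 * (n : ℝ) ^ 2 * (p₁ ^ 2 + p₂ ^ 2) ^ (n - 1) * p₄ /
          (κ ^ 2 * (p₁ ^ 2 + p₂ ^ 2) ^ n + p₃ ^ 2 + p₄ ^ 2) ^ 2)
      = 4 * Real.pi ^ 2 * (n : ℝ) * Real.sign p₄ := by
  set f : ℝ → ℝ := fun t => 2 * π * κ ^ 2 * n ^ 2 * p₄ *
    (t ^ (n - 1) / √(κ ^ 2 * t ^ n + p₄ ^ 2) ^ 3)
  have hfiber (p₁ p₂ : ℝ) : ∫ p₃ : ℝ,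
      4 * κ ^ 2 * (n : ℝ) ^ 2 * (p₁ ^ 2 + p₂ ^ 2) ^ (n - 1) * p₄ /
        (κ ^ 2 * (p₁ ^ 2 + p₂ ^ 2) ^ n + p₃ ^ 2 + p₄ ^ 2) ^ 2 = f (p₁ ^ 2 + p₂ ^ 2) := by
    simp_rw [add_right_comm _ (_ ^ 2) (p₄ ^ 2)]
    rw [integral_div_add_sq_sq _ (by positivity)]
    ring
  have hint : IntegrableOn f (Ioi 0) :=
    (integrableOn_Ioi_pow_div_sqrt_mul_pow_add_cube (by omega) (by positivity)
      (by positivity)).const_mul _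
  simp_rw [hfiber]
  rw [integral_integral (integrable_comp_sq_add_sq_iff.2 hint), ← Measure.volume_eq_prod,
    integral_comp_sq_add_sq f, integral_const_mul,
    integral_Ioi_pow_div_sqrt_mul_pow_add_cube (by omega) (by positivity) (by positivity),
    sqrt_sq_eq_abs, ← Real.div_abs_eq_sign, smul_eq_mul]
  field_simp
  ring
end
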